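/- If o(G) ⊆ {P} and o(H) ⊆ {P}, then G+H is undetermined (o(G+H) = ∅), for three-player impartial games under normal play. -/
import Mathlib


inductive IGame : Type where
  | mk : List IGame → IGame

namespace IGame

def opts : IGame → List IGame
  | mk l => l

theorem sizeOf_lt_of_mem {g G : IGame} (h : g ∈ G.opts) : sizeOf g < sizeOf G := by
  cases G with
  | mk l =>
    have h2 : g ∈ l := h
    have := List.sizeOf_lt_of_mem h2
    simp only [mk.sizeOf_spec]
    omega

def add : IGame → IGame → IGame
  | G, H =>
    mk ((G.opts.attach.map fun g => add g.1 H) ++ (H.opts.attach.map fun h => add G h.1))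
termination_by G H => sizeOf G + sizeOf H
decreasing_by
  · have := sizeOf_lt_of_mem g.2; omega
  · have := sizeOf_lt_of_mem h.2; omega

inductive Player : Type where
  | N | O | P
  deriving DecidableEq

def out : IGame → Player → Prop
  | G, .N => ∃ g : {x // x ∈ G.opts}, out g.1 .P
  | G, .O => ∀ g : {x // x ∈ G.opts}, out g.1 .N
  | G, .P => ∀ g : {x // x ∈ G.opts}, out g.1 .O
termination_by G _ => sizeOf G
decreasing_by
  all_goals exact sizeOf_lt_of_mem g.2

theorem out_N {G : IGame} : out G .N ↔ ∃ g ∈ G.opts, out g .P := by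
  rw [out]
  exact ⟨fun ⟨g, h⟩ => ⟨g.1, g.2, h⟩, fun ⟨g, hm, h⟩ => ⟨⟨g, hm⟩, h⟩⟩

theorem out_O {G : IGame} : out G .O ↔ ∀ g ∈ G.opts, out g .N := by
  rw [out]
  exact ⟨fun h g hm => h ⟨g, hm⟩, fun h g => h g.1 g.2⟩

theorem out_P {G : IGame} : out G .P ↔ ∀ g ∈ G.opts, out g .O := by
  rw [out]
  exact ⟨fun h g hm => h ⟨g, hm⟩, fun h g => h g.1 g.2⟩

def outcome (G : IGame) : Set Player := {p | out G p}

def nim : Nat → IGame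
  | 0 => mk []
  | n+1 => mk ((nim n).opts ++ [nim n])

end IGame


namespace IGame

theorem mem_opts_add {x G H : IGame} :
    x ∈ (add G H).opts ↔ (∃ g ∈ G.opts, x = add g H) ∨ ∃ h ∈ H.opts, x = add G h := by
  rw [add]
  show x ∈ _ ++ _ ↔ _
  simp only [List.mem_append, List.mem_map, List.mem_attach]
  constructor
  · rintro (⟨⟨g,hg⟩,-,rfl⟩|⟨⟨h,hh⟩,-,rfl⟩)
    exacts [Or.inl ⟨g,hg,rfl⟩, Or.inr ⟨h,hh,rfl⟩]
  · rintro (⟨g,hg,rfl⟩|⟨h,hh,rfl⟩)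
    exacts [Or.inl ⟨⟨g,hg⟩,trivial,rfl⟩, Or.inr ⟨⟨h,hh⟩,trivial,rfl⟩]

theorem add_mem_opts_left {g G H : IGame} (h : g ∈ G.opts) : add g H ∈ (add G H).opts :=
  mem_opts_add.mpr (Or.inl ⟨g, h, rfl⟩)

theorem add_mem_opts_right {h G H : IGame} (hm : h ∈ H.opts) : add G h ∈ (add G H).opts :=
  mem_opts_add.mpr (Or.inr ⟨h, hm, rfl⟩)

theorem key : ∀ n G H, sizeOf G + sizeOf H ≤ n →
    (¬out G .N → ¬out H .N → ¬out (add G H) .N) ∧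
    (¬out G .O → ¬out H .N → ¬out (add G H) .O) ∧
    (¬out G .N → ¬out H .O → ¬out (add G H) .O) ∧
    (¬out G .P → ¬out H .N → ¬out (add G H) .P) ∧
    (¬out G .N → ¬out H .P → ¬out (add G H) .P) := by
  intro n
  induction n using Nat.strong_induction_on with
  | _ n IH =>
  intro G H hn
  refine ⟨?_, ?_, ?_, ?_, ?_⟩
  · -- A
    intro hGN hHN hcon
    rw [out_N] at hcon
    obtain ⟨x, hx, hxP⟩ := hcon
    rcases mem_opts_add.mp hx with ⟨g, hg, rfl⟩ | ⟨h, hh, rfl⟩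
    · have hs := sizeOf_lt_of_mem hg
      have hgP : ¬out g .P := fun hp => hGN (out_N.mpr ⟨g, hg, hp⟩)
      exact (IH (sizeOf g + sizeOf H) (by omega) g H le_rfl).2.2.2.1 hgP hHN hxP
    · have hs := sizeOf_lt_of_mem hh
      have hhP : ¬out h .P := fun hp => hHN (out_N.mpr ⟨h, hh, hp⟩)
      exact (IH (sizeOf G + sizeOf h) (by omega) G h le_rfl).2.2.2.2 hGN hhP hxP
  · -- B1
    intro hGO hHN hcon
    rw [out_O] at hGO hcon
    push_neg at hGO
    obtain ⟨g, hg, hgN⟩ := hGO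
    have hs := sizeOf_lt_of_mem hg
    exact (IH (sizeOf g + sizeOf H) (by omega) g H le_rfl).1 hgN hHN
      (hcon _ (add_mem_opts_left hg))
  · -- B2
    intro hGN hHO hcon
    rw [out_O] at hHO hcon
    push_neg at hHO
    obtain ⟨h, hh, hhN⟩ := hHO
    have hs := sizeOf_lt_of_mem hh
    exact (IH (sizeOf G + sizeOf h) (by omega) G h le_rfl).1 hGN hhN
      (hcon _ (add_mem_opts_right hh))
  · -- C1
    intro hGP hHN hcon
    rw [out_P] at hGP hcon
    push_neg at hGP
    obtain ⟨g, hg, hgO⟩ := hGP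
    have hs := sizeOf_lt_of_mem hg
    exact (IH (sizeOf g + sizeOf H) (by omega) g H le_rfl).2.1 hgO hHN
      (hcon _ (add_mem_opts_left hg))
  · -- C2
    intro hGN hHP hcon
    rw [out_P] at hHP hcon
    push_neg at hHP
    obtain ⟨h, hh, hhO⟩ := hHP
    have hs := sizeOf_lt_of_mem hh
    exact (IH (sizeOf G + sizeOf h) (by omega) G h le_rfl).2.2.1 hGN hhO
      (hcon _ (add_mem_opts_right hh))

theorem keyA {G H : IGame} (h1 : ¬out G .N) (h2 : ¬out H .N) : ¬out (add G H) .N :=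
  (key _ G H le_rfl).1 h1 h2

theorem keyB2 {G H : IGame} (h1 : ¬out G .N) (h2 : ¬out H .O) : ¬out (add G H) .O :=
  (key _ G H le_rfl).2.2.1 h1 h2

end IGame

open IGame in
/-- If `o(G) ⊆ {P}` and `o(H) ⊆ {P}`, then `G+H` is undetermined. -/
theorem subP_sum_undetermined (G H : IGame)
    (hG : IGame.outcome G ⊆ {Player.P}) (hH : IGame.outcome H ⊆ {Player.P}) :
    IGame.outcome (IGame.add G H) = ∅ := by
  have hGN : ¬out G .N := fun h => by simpa using hG (show Player.N ∈ outcome G from h)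
  have hGO : ¬out G .O := fun h => by simpa using hG (show Player.O ∈ outcome G from h)
  have hHN : ¬out H .N := fun h => by simpa using hH (show Player.N ∈ outcome H from h)
  have hHO : ¬out H .O := fun h => by simpa using hH (show Player.O ∈ outcome H from h)
  rw [Set.eq_empty_iff_forall_notMem]
  intro p hp
  cases p with
  | N => exact keyA hGN hHN hp
  | O => exact keyB2 hGN hHO hp
  | P =>
    have hp' : out (add G H) .P := hp
    rw [out_P] at hp'
    rw [out_O] at hGO
    push_neg at hGO
    obtain ⟨g, hg, hgN⟩ := hGO
    exact keyB2 hgN hHO (hp' _ (add_mem_opts_left hg))
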